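/- Let a, a', b > 0 and let X be a random variable with the real beta-hypergeometric distribution μ_{a,a',b}. Then for all real t with t + a > 0, E(X^t) = (Γ(a+b)/Γ(a))·(Γ(t+a)/Γ(t+a+b))·₃F₂(a,b,a+t;a+a',t+a+b;1)/₃F₂(a,a,b;a+b,a+a';1). -/

import Mathlib

open MeasureTheory ProbabilityTheory Real Set Filter Topology

noncomputable def gammaDens (p σ y : ℝ) : ℝ :=
  if 0 < y then σ ^ p / Real.Gamma p * Real.exp (-(σ * y)) * y ^ (p - 1) else 0

noncomputable def gammaM (p σ : ℝ) : Measure ℝ :=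
  MeasureTheory.volume.withDensity fun y => ENNReal.ofReal (gammaDens p σ y)

noncomputable def beta1Dens (p q x : ℝ) : ℝ :=
  if 0 < x ∧ x < 1 then
    Real.Gamma (p + q) / (Real.Gamma p * Real.Gamma q) * x ^ (p - 1) * (1 - x) ^ (q - 1)
  else 0

noncomputable def beta1 (p q : ℝ) : Measure ℝ :=
  MeasureTheory.volume.withDensity fun x => ENNReal.ofReal (beta1Dens p q x)

noncomputable def beta2Dens (p q y : ℝ) : ℝ :=
  if 0 < y then
    Real.Gamma (p + q) / (Real.Gamma p * Real.Gamma q) * y ^ (p - 1) * (1 + y) ^ (-(p + q))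
  else 0

noncomputable def beta2 (p q : ℝ) : Measure ℝ :=
  MeasureTheory.volume.withDensity fun y => ENNReal.ofReal (beta2Dens p q y)

/-- Pochhammer (rising factorial) symbol `(a)_n`. -/
noncomputable def poch (a : ℝ) (n : ℕ) : ℝ := ∏ i ∈ Finset.range n, (a + (i : ℝ))

/-- Gauss hypergeometric function `₂F₁(a,b;c;x)`. -/
noncomputable def F21 (a b c x : ℝ) : ℝ :=
  ∑' n : ℕ, poch a n * poch b n / ((n.factorial : ℝ) * poch c n) * x ^ n

/-- Generalized hypergeometric `₃F₂(a₁,a₂,a₃;b₁,b₂;1)` at unit argument. -/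
noncomputable def F32one (a1 a2 a3 b1 b2 : ℝ) : ℝ :=
  ∑' n : ℕ, poch a1 n * poch a2 n * poch a3 n /
    ((n.factorial : ℝ) * poch b1 n * poch b2 n)

/-- Normalizing constant of the real beta-hypergeometric distribution. -/
noncomputable def Cbh (a a' b : ℝ) : ℝ :=
  Real.Gamma (a + b) / (Real.Gamma a * Real.Gamma b * F32one a a b (a + b) (a + a'))

noncomputable def bhDens (a a' b x : ℝ) : ℝ :=
  if 0 < x ∧ x < 1 then
    Cbh a a' b * x ^ (a - 1) * (1 - x) ^ (b - 1) * F21 a b (a + a') x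
  else 0

/-- The real beta-hypergeometric distribution `μ_{a,a',b}`. -/
noncomputable def bhMeasure (a a' b : ℝ) : Measure ℝ :=
  MeasureTheory.volume.withDensity fun x => ENNReal.ofReal (bhDens a a' b x)

/-!
Expanding `₂F₁` in its power series writes the density of `μ_{a,a',b}` as a nonnegative series of
Beta kernels `x ^ (a + n - 1) * (1 - x) ^ (b - 1)`, so by monotone convergence
`E(X^t) = C · ∑ₙ cₙ B(t + a + n, b)`. Since `B(s + n, b) = B(s, b) (s)ₙ / (s + b)ₙ`, the terms of this
series are those of `₃F₂(a, b, t + a; a + a', t + a + b; 1)`.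

The computation is carried out in `ℝ≥0∞`, so no integrability or summability is needed:
`(∑' n, ENNReal.ofReal (u n)).toReal = ∑' n, u n` holds even for a divergent series, both sides then
being `0`.
-/

lemma poch_succ (a : ℝ) (n : ℕ) : poch a (n + 1) = poch a n * (a + n) :=
  Finset.prod_range_succ _ _

lemma poch_pos {a : ℝ} (ha : 0 < a) (n : ℕ) : 0 < poch a n :=
  Finset.prod_pos fun _ _ => by positivity

lemma poch_eq_eval_ascPochhammer (a : ℝ) (n : ℕ) : poch a n = (ascPochhammer ℝ n).eval a := by
  induction n with
  | zero => simp [poch]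
  | succ n ih => rw [poch_succ, ih, ascPochhammer_succ_eval]

lemma Gamma_add_nat_eq_poch_mul {s : ℝ} (hs : 0 < s) (n : ℕ) :
    Gamma (s + n) = poch s n * Gamma s := by
  induction n with
  | zero => simp [poch]
  | succ n ih =>
    rw [Nat.cast_succ, ← add_assoc, Gamma_add_one (by positivity), ih, poch_succ]
    ring

lemma beta_add_nat {p q : ℝ} (hp : 0 < p) (hq : 0 < q) (n : ℕ) :
    beta (p + n) q = beta p q * (poch p n / poch (p + q) n) := by
  rw [beta, beta, add_right_comm, Gamma_add_nat_eq_poch_mul hp,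
    Gamma_add_nat_eq_poch_mul (add_pos hp hq)]
  ring

lemma lintegral_rpow_mul_one_sub_rpow {p q : ℝ} (hp : 0 < p) (hq : 0 < q) :
    ∫⁻ x in Ioo 0 1, ENNReal.ofReal (x ^ (p - 1) * (1 - x) ^ (q - 1)) =
      ENNReal.ofReal (beta p q) := by
  have h := lintegral_betaPDF_eq_one hp hq
  simp_rw [lintegral_betaPDF, mul_assoc, ENNReal.ofReal_mul (one_div_pos.2 (beta_pos hp hq)).le,
    lintegral_const_mul' _ _ ENNReal.ofReal_ne_top] at h
  rw [ENNReal.eq_inv_of_mul_eq_one_left ((mul_comm _ _).trans h), ← ENNReal.ofReal_inv_of_pos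
    (one_div_pos.2 (beta_pos hp hq)), one_div, inv_inv]

noncomputable def F21Coeff (a b c : ℝ) (n : ℕ) : ℝ :=
  poch a n * poch b n / ((n.factorial : ℝ) * poch c n)

noncomputable def F32Coeff (a₁ a₂ a₃ b₁ b₂ : ℝ) (n : ℕ) : ℝ :=
  poch a₁ n * poch a₂ n * poch a₃ n / ((n.factorial : ℝ) * poch b₁ n * poch b₂ n)

lemma F32one_eq_tsum (a₁ a₂ a₃ b₁ b₂ : ℝ) :
    F32one a₁ a₂ a₃ b₁ b₂ = ∑' n, F32Coeff a₁ a₂ a₃ b₁ b₂ n := rfl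

lemma F21Coeff_nonneg {a b c : ℝ} (ha : 0 < a) (hb : 0 < b) (hc : 0 < c) (n : ℕ) :
    0 ≤ F21Coeff a b c n := by
  have := poch_pos ha n; have := poch_pos hb n; have := poch_pos hc n
  unfold F21Coeff; positivity

lemma F32Coeff_nonneg {a₁ a₂ a₃ b₁ b₂ : ℝ} (h₁ : 0 < a₁) (h₂ : 0 < a₂) (h₃ : 0 < a₃)
    (h₄ : 0 < b₁) (h₅ : 0 < b₂) (n : ℕ) : 0 ≤ F32Coeff a₁ a₂ a₃ b₁ b₂ n := by
  have := poch_pos h₁ n; have := poch_pos h₂ n; have := poch_pos h₃ n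
  have := poch_pos h₄ n; have := poch_pos h₅ n
  unfold F32Coeff; positivity

lemma F21Coeff_mul_beta_add_nat {a b c s : ℝ} (hs : 0 < s) (hb : 0 < b) (n : ℕ) :
    F21Coeff a b c n * beta (s + n) b = beta s b * F32Coeff a b s c (s + b) n := by
  rw [beta_add_nat hs hb, F21Coeff, F32Coeff]
  ring

lemma hasSum_F21 {a b c x : ℝ} (ha : 0 < a) (hb : 0 < b) (hc : 0 < c) (hx : |x| < 1) :
    HasSum (fun n => F21Coeff a b c n * x ^ n) (F21 a b c x) := by
  have hradius := ordinaryHypergeometricSeries_radius_eq_one (𝔸 := ℝ) a b c fun k =>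
    have := k.cast_nonneg (α := ℝ)
    ⟨by linarith, by linarith, by linarith⟩
  have hterm (n : ℕ) :
      ordinaryHypergeometricSeries ℝ a b c n (fun _ => x) = F21Coeff a b c n * x ^ n := by
    simp only [ordinaryHypergeometricSeries_apply_eq, F21Coeff, poch_eq_eval_ascPochhammer,
      smul_eq_mul]
    ring
  have hx' : x ∈ Metric.eball 0 (ordinaryHypergeometricSeries ℝ a b c).radius := by
    rw [hradius]; simpa [Real.enorm_eq_ofReal_abs] using hx
  exact (((ordinaryHypergeometricSeries ℝ a b c).summable_norm_apply hx').of_norm.congr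
    hterm).hasSum

lemma Cbh_nonneg {a a' b : ℝ} (ha : 0 < a) (hb : 0 < b) (hc : 0 < a + a') : 0 ≤ Cbh a a' b := by
  have hF : 0 ≤ F32one a a b (a + b) (a + a') :=
    tsum_nonneg (F32Coeff_nonneg ha ha hb (add_pos ha hb) hc)
  have := Gamma_pos_of_pos ha; have := Gamma_pos_of_pos hb
  have := Gamma_pos_of_pos (add_pos ha hb)
  unfold Cbh; positivity

lemma hasSum_bhDens {a a' b x : ℝ} (ha : 0 < a) (hb : 0 < b) (hc : 0 < a + a')
    (hx : x ∈ Ioo 0 1) :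
    HasSum (fun n : ℕ => Cbh a a' b * F21Coeff a b (a + a') n *
      (x ^ (a + n - 1) * (1 - x) ^ (b - 1))) (bhDens a a' b x) := by
  have hF := hasSum_F21 ha hb hc (abs_lt.2 ⟨by linarith [hx.1], hx.2⟩)
  rw [bhDens, if_pos (show 0 < x ∧ x < 1 from hx)]
  refine (hF.mul_left (Cbh a a' b * x ^ (a - 1) * (1 - x) ^ (b - 1))).congr_fun fun n => ?_
  rw [add_sub_right_comm, rpow_add hx.1, rpow_natCast]
  ring

lemma bhMeasure_eq_withDensity_tsum {a a' b : ℝ} (ha : 0 < a) (hb : 0 < b) (hc : 0 < a + a') :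
    bhMeasure a a' b = (volume.restrict (Ioo 0 1)).withDensity fun x =>
      ∑' n : ℕ, ENNReal.ofReal (Cbh a a' b * F21Coeff a b (a + a') n) *
        ENNReal.ofReal (x ^ (a + n - 1) * (1 - x) ^ (b - 1)) := by
  rw [bhMeasure, ← withDensity_indicator measurableSet_Ioo]
  congr 1
  funext x
  by_cases hx : x ∈ Ioo 0 1
  · have hcoeff (n : ℕ) : 0 ≤ Cbh a a' b * F21Coeff a b (a + a') n :=
      mul_nonneg (Cbh_nonneg ha hb hc) (F21Coeff_nonneg ha hb hc n)
    have hbase (n : ℕ) : 0 ≤ x ^ (a + n - 1) * (1 - x) ^ (b - 1) :=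
      mul_nonneg (rpow_nonneg hx.1.le _) (rpow_nonneg (sub_nonneg.2 hx.2.le) _)
    have hsum := hasSum_bhDens ha hb hc hx
    rw [indicator_of_mem hx, ← hsum.tsum_eq,
      ENNReal.ofReal_tsum_of_nonneg (fun n => mul_nonneg (hcoeff n) (hbase n)) hsum.summable]
    simp_rw [ENNReal.ofReal_mul (hcoeff _)]
  · rw [indicator_of_notMem hx, bhDens, if_neg (show ¬(0 < x ∧ x < 1) from hx),
      ENNReal.ofReal_zero]

lemma lintegral_rpow_bhMeasure {a a' b t : ℝ} (ha : 0 < a) (hb : 0 < b) (hc : 0 < a + a')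
    (ht : 0 < t + a) :
    ∫⁻ x, ENNReal.ofReal (x ^ t) ∂bhMeasure a a' b =
      ENNReal.ofReal (Cbh a a' b * beta (t + a) b) *
        ∑' n, ENNReal.ofReal (F32Coeff a b (t + a) (a + a') (t + a + b) n) := by
  rw [bhMeasure_eq_withDensity_tsum ha hb hc,
    lintegral_withDensity_eq_lintegral_mul _ (by fun_prop) (by fun_prop)]
  simp only [Pi.mul_apply, ← ENNReal.tsum_mul_right]
  rw [lintegral_tsum fun n => by fun_prop, ← ENNReal.tsum_mul_left]
  refine tsum_congr fun n => ?_
  have hpow : ∀ x ∈ Ioo (0 : ℝ) 1,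
      ENNReal.ofReal (Cbh a a' b * F21Coeff a b (a + a') n) *
          ENNReal.ofReal (x ^ (a + n - 1) * (1 - x) ^ (b - 1)) * ENNReal.ofReal (x ^ t) =
        ENNReal.ofReal (Cbh a a' b * F21Coeff a b (a + a') n) *
          ENNReal.ofReal (x ^ (t + a + n - 1) * (1 - x) ^ (b - 1)) := by
    intro x hx
    rw [mul_assoc, ← ENNReal.ofReal_mul
      (mul_nonneg (rpow_nonneg hx.1.le _) (rpow_nonneg (sub_nonneg.2 hx.2.le) _)),
      show t + a + n - 1 = (a + n - 1) + t by ring, rpow_add hx.1]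
    congr 2; ring
  have hCbeta : 0 ≤ Cbh a a' b * beta (t + a) b :=
    mul_nonneg (Cbh_nonneg ha hb hc) (beta_pos ht hb).le
  rw [setLIntegral_congr_fun measurableSet_Ioo hpow, lintegral_const_mul _ (by fun_prop),
    lintegral_rpow_mul_one_sub_rpow (by positivity) hb, ← ENNReal.ofReal_mul
      (mul_nonneg (Cbh_nonneg ha hb hc) (F21Coeff_nonneg ha hb hc n)), mul_assoc,
    F21Coeff_mul_beta_add_nat ht hb, ← mul_assoc, ENNReal.ofReal_mul hCbeta]

lemma integral_rpow_bhMeasure {a a' b t : ℝ} (ha : 0 < a) (hb : 0 < b) (hc : 0 < a + a')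
    (ht : 0 < t + a) :
    ∫ x, x ^ t ∂bhMeasure a a' b =
      Cbh a a' b * beta (t + a) b * F32one a b (t + a) (a + a') (t + a + b) := by
  have hIoo : ∀ᵐ x ∂bhMeasure a a' b, x ∈ Ioo 0 1 := by
    rw [bhMeasure_eq_withDensity_tsum ha hb hc]
    exact withDensity_absolutelyContinuous _ _ (ae_restrict_mem measurableSet_Ioo)
  rw [integral_eq_lintegral_of_nonneg_ae (hIoo.mono fun x hx => rpow_nonneg hx.1.le t)
      (by fun_prop), lintegral_rpow_bhMeasure ha hb hc ht, ENNReal.toReal_mul,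
    ENNReal.tsum_toReal_eq fun _ => ENNReal.ofReal_ne_top,
    ENNReal.toReal_ofReal (mul_nonneg (Cbh_nonneg ha hb hc) (beta_pos ht hb).le), F32one_eq_tsum]
  congr 1
  exact tsum_congr fun n => ENNReal.toReal_ofReal
    (F32Coeff_nonneg ha hb ht hc (by positivity) n)

lemma Cbh_mul_beta {a a' b : ℝ} (hb : 0 < b) (s : ℝ) :
    Cbh a a' b * beta s b =
      Gamma (a + b) / Gamma a * (Gamma s / Gamma (s + b)) / F32one a a b (a + b) (a + a') := by
  have := (Gamma_pos_of_pos hb).ne'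
  rw [Cbh, beta]
  field_simp

theorem bh_mellin_general {Ω : Type*} [MeasurableSpace Ω] (μ : Measure Ω)
    (X : Ω → ℝ) (hX : Measurable X)
    (a a' b : ℝ) (ha : 0 < a) (ha' : 0 < a') (hb : 0 < b)
    (hXlaw : μ.map X = bhMeasure a a' b)
    (t : ℝ) (ht : 0 < t + a) :
    ∫ ω, X ω ^ t ∂μ =
      Real.Gamma (a + b) / Real.Gamma a * (Real.Gamma (t + a) / Real.Gamma (t + a + b)) *
        (F32one a b (a + t) (a + a') (t + a + b) / F32one a a b (a + b) (a + a')) := by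
  rw [← integral_map (f := fun x : ℝ => x ^ t) hX.aemeasurable (by fun_prop), hXlaw,
    integral_rpow_bhMeasure ha hb (add_pos ha ha') ht, Cbh_mul_beta hb, add_comm a t]
  ring

theorem bh_mellin {Ω : Type*} [MeasurableSpace Ω] (μ : Measure Ω)
    [IsProbabilityMeasure μ] (X : Ω → ℝ) (hX : Measurable X)
    (a a' b : ℝ) (ha : 0 < a) (ha' : 0 < a') (hb : 0 < b)
    (hXlaw : μ.map X = bhMeasure a a' b)
    (t : ℝ) (ht : 0 < t + a) :
    ∫ ω, X ω ^ t ∂μ =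
      Real.Gamma (a + b) / Real.Gamma a * (Real.Gamma (t + a) / Real.Gamma (t + a + b)) *
        (F32one a b (a + t) (a + a') (t + a + b) / F32one a a b (a + b) (a + a')) :=
  bh_mellin_general μ X hX a a' b ha ha' hb hXlaw t ht
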